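/- Let X be a two-sided quaternionic Banach space and let T ∈ B(X) be power-bounded. Then for every s ∈ ℍ with |s| > 1 and every integer n ≥ 1, one has s ∈ ρ_S(T) and ‖Y_L^n(s,T)‖ ≤ p(T) / (1 − |s|^{−1})ⁿ. -/

import Mathlib

/-!
`Q_s(T)` is a real polynomial in `T` whose symbol factors over `ℍ` as `(s - X)(s̄ - X)`. Evaluate
quaternionic power series at `T` by `f(T) = ∑ₖ Tᵏ fₖ`, the coefficient acting by left multiplication
before `Tᵏ`: this is compatible with multiplying `f` on the left by real polynomials and on the right
by constants, and converges when `T` is power-bounded and `f` has absolutely summable coefficients.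
For `|s| > 1` the series `(s̄ - X)⁻¹(s - X)⁻¹` qualifies and has real coefficients, so it gives a
right-linear inverse of `Q_s(T)` commuting with `T`. Since `Q_s(X)ⁿ (s - X)⁻ⁿ = (s̄ - X)ⁿ`, whose
value at `T` is the binomial sum in `S_L^{-n}(s,T)`, we get `S_L^{-n}(s,T) = ((s - X)⁻ⁿ)(T)`. Hence
`Y_L^n(s,T) = ∑ₖ Tⁿ⁺ᵏ cₖ sⁿ` with `c = (s - X)⁻ⁿ`, and submultiplicativity of the `ℓ¹` norm of
coefficients gives `‖Y_L^n(s,T)‖ ≤ p(T) ‖(s - X)⁻¹‖₁ⁿ |s|ⁿ = p(T) (|s| / (|s| - 1))ⁿ`.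
-/

open MulOpposite Filter

noncomputable section

local notation "ℍ" => Quaternion ℝ

variable {X : Type*} [NormedAddCommGroup X] [NormedSpace ℝ X] [CompleteSpace X]
  [Module ℍ X] [Module ℍᵐᵒᵖ X]
  [IsScalarTower ℝ ℍ X] [IsScalarTower ℝ ℍᵐᵒᵖ X]
  [SMulCommClass ℝ ℍ X] [SMulCommClass ℝ ℍᵐᵒᵖ X]
  [SMulCommClass ℍ ℍᵐᵒᵖ X]
  [IsBoundedSMul ℍ X] [IsBoundedSMul ℍᵐᵒᵖ X]

/-- Left multiplication by a quaternion, as a bounded real-linear operator on `X`. -/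
def lmulL (s : ℍ) : X →L[ℝ] X :=
  LinearMap.mkContinuous
    { toFun := fun v => s • v
      map_add' := fun u v => smul_add s u v
      map_smul' := fun r v => (smul_comm r s v).symm }
    ‖s‖ (fun v => norm_smul_le s v)

/-- `T` is right `ℍ`-linear: `T (v q) = (T v) q`. -/
def RightLinear (T : X →L[ℝ] X) : Prop :=
  ∀ (q : ℍ) (v : X), T (op q • v) = op q • T v

/-- The operator `Q_s(T) = T² − 2 Re(s) T + |s|² I`. -/
def Qs (s : ℍ) (T : X →L[ℝ] X) : X →L[ℝ] X :=
  T * T - (2 * s.re) • T + (‖s‖ ^ 2 : ℝ) • (1 : X →L[ℝ] X)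

/-- Invertibility in the algebra `B(X)` of bounded right `ℍ`-linear operators. -/
def InvertibleInB (A : X →L[ℝ] X) : Prop :=
  ∃ B : X →L[ℝ] X, RightLinear B ∧ A * B = 1 ∧ B * A = 1

/-- The S-resolvent set of `T`. -/
def sResolventSet (T : X →L[ℝ] X) : Set ℍ :=
  {s : ℍ | InvertibleInB (Qs s T)}

/-- The S-spectrum of `T`. -/
def sSpectrum (T : X →L[ℝ] X) : Set ℍ :=
  {s : ℍ | ¬ InvertibleInB (Qs s T)}

/-- The left S-resolvent operator `S_L^{-1}(s,T) = Q_s(T)⁻¹ (conj(s) I − T)`. -/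
def sResL (s : ℍ) (T : X →L[ℝ] X) : X →L[ℝ] X :=
  Ring.inverse (Qs s T) * (lmulL (star s) - T)

/-- `T` is power-bounded: `sup_{n ≥ 1} ‖Tⁿ‖ < ∞`. -/
def PowerBounded (T : X →L[ℝ] X) : Prop :=
  ∃ C : ℝ, ∀ n : ℕ, 1 ≤ n → ‖T ^ n‖ ≤ C

/-- `p(T) = sup_{n ≥ 1} ‖Tⁿ‖`. -/
def pBound (T : X →L[ℝ] X) : ℝ :=
  ⨆ n : ℕ, ‖T ^ (n + 1)‖

/-- `S_L^{-n}(s,T) = Q_s(T)^{-n} Σ_{m=0}^{n} C(n,m) (−T)ᵐ conj(s)^{n−m}`. -/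
def sResLn (n : ℕ) (s : ℍ) (T : X →L[ℝ] X) : X →L[ℝ] X :=
  Ring.inverse (Qs s T) ^ n *
    ∑ m ∈ Finset.range (n + 1), (n.choose m : ℝ) • ((-T) ^ m * lmulL (star s ^ (n - m)))

/-- `S_R^{-n}(s,T) = (Σ_{m=0}^{n} C(n,m) conj(s)^{n−m} (−T)ᵐ) Q_s(T)^{-n}`. -/
def sResRn (n : ℕ) (s : ℍ) (T : X →L[ℝ] X) : X →L[ℝ] X :=
  (∑ m ∈ Finset.range (n + 1), (n.choose m : ℝ) • (lmulL (star s ^ (n - m)) * (-T) ^ m)) *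
    Ring.inverse (Qs s T) ^ n

/-- `Y_L^n(s,T) = Tⁿ S_L^{-n}(s,T) sⁿ`. -/
def YLn (n : ℕ) (s : ℍ) (T : X →L[ℝ] X) : X →L[ℝ] X :=
  T ^ n * sResLn n s T * lmulL (s ^ n)

/-- `Y_R^n(s,T) = sⁿ S_R^{-n}(s,T) Tⁿ`. -/
def YRn (n : ℕ) (s : ℍ) (T : X →L[ℝ] X) : X →L[ℝ] X :=
  lmulL (s ^ n) * sResRn n s T * T ^ n

open PowerSeries
open Finset.HasAntidiagonal

lemma norm_coeff_mul_le (f g : ℍ⟦X⟧) (k : ℕ) :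
    ‖coeff k (f * g)‖ ≤
      ∑ p ∈ antidiagonal k, ‖coeff p.1 f‖ * ‖coeff p.2 g‖ := by
  rw [coeff_mul]
  exact (norm_sum_le _ _).trans (Finset.sum_le_sum fun _ _ => norm_mul_le _ _)

def l1Series : Subring ℍ⟦X⟧ where
  carrier := {f | Summable fun k => ‖coeff k f‖}
  mul_mem' {f g} (hf : Summable _) (hg : Summable _) :=
    Summable.of_nonneg_of_le (fun _ => norm_nonneg _) (norm_coeff_mul_le f g)
      (summable_sum_mul_antidiagonal_of_summable_mul (f := fun k => ‖coeff k f‖)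
        (g := fun k => ‖coeff k g‖)
        (hf.mul_of_nonneg hg (fun _ => norm_nonneg _) fun _ => norm_nonneg _))
  one_mem' := summable_of_ne_finset_zero (s := {0}) fun k hk => by
    rw [coeff_one, if_neg (Finset.notMem_singleton.mp hk), norm_zero]
  add_mem' {f g} hf hg := (hf.add hg).of_nonneg_of_le (fun _ => norm_nonneg _)
    fun k => by rw [map_add]; exact norm_add_le _ _
  zero_mem' := by simp only [Set.mem_ofPred_eq, map_zero, norm_zero]; exact summable_zero
  neg_mem' {f} hf := by simp only [Set.mem_ofPred_eq, map_neg, norm_neg]; exact hf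

lemma mem_l1Series {f : ℍ⟦X⟧} : f ∈ l1Series ↔ Summable fun k => ‖coeff k f‖ := Iff.rfl

def l1Norm (f : ℍ⟦X⟧) : ℝ := ∑' k, ‖coeff k f‖

lemma l1Norm_mul_le {f g : ℍ⟦X⟧} (hf : f ∈ l1Series) (hg : g ∈ l1Series) :
    l1Norm (f * g) ≤ l1Norm f * l1Norm g := by
  set a : ℕ → ℝ := fun k => ‖coeff k f‖
  set b : ℕ → ℝ := fun k => ‖coeff k g‖
  have hab : Summable fun p : ℕ × ℕ => a p.1 * b p.2 :=
    Summable.mul_of_nonneg hf hg (fun _ => norm_nonneg _) fun _ => norm_nonneg _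
  calc l1Norm (f * g) ≤ ∑' k, ∑ p ∈ antidiagonal k, a p.1 * b p.2 :=
        Summable.tsum_le_tsum (norm_coeff_mul_le f g) (mul_mem hf hg)
          (summable_sum_mul_antidiagonal_of_summable_mul hab)
    _ = l1Norm f * l1Norm g := (Summable.tsum_mul_tsum_eq_tsum_sum_antidiagonal hf hg hab).symm

lemma l1Norm_one : l1Norm 1 = 1 :=
  (tsum_eq_single 0 fun k hk => by rw [coeff_one, if_neg hk, norm_zero]).trans (by simp)

lemma l1Norm_pow_le {f : ℍ⟦X⟧} (hf : f ∈ l1Series) (n : ℕ) : l1Norm (f ^ n) ≤ l1Norm f ^ n := by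
  induction n with
  | zero => rw [pow_zero, pow_zero, l1Norm_one]
  | succ n ih =>
    rw [pow_succ, pow_succ]
    exact (l1Norm_mul_le (pow_mem hf n) hf).trans
      (mul_le_mul_of_nonneg_right ih (tsum_nonneg fun _ => norm_nonneg _))

lemma l1Norm_mul_C (f : ℍ⟦X⟧) (q : ℍ) : l1Norm (f * C q) = l1Norm f * ‖q‖ := by
  simp only [l1Norm, coeff_mul_C, norm_mul, tsum_mul_right]

lemma C_mem_l1Series (q : ℍ) : C q ∈ l1Series :=
  summable_of_ne_finset_zero (s := {0}) fun k hk => by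
    rw [coeff_C, if_neg (Finset.notMem_singleton.mp hk), norm_zero]

lemma X_mem_l1Series : (PowerSeries.X : ℍ⟦X⟧) ∈ l1Series :=
  summable_of_ne_finset_zero (s := {1}) fun k hk => by
    rw [coeff_X, if_neg (Finset.notMem_singleton.mp hk), norm_zero]

/-- The expansion of `(q - X)⁻¹`. -/
def geomSeries (q : ℍ) : ℍ⟦X⟧ := mk fun k => q⁻¹ ^ (k + 1)

lemma norm_coeff_geomSeries (q : ℍ) (k : ℕ) : ‖coeff k (geomSeries q)‖ = ‖q‖⁻¹ ^ (k + 1) := by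
  rw [geomSeries, coeff_mk, norm_pow, norm_inv]

lemma geomSeries_mem_l1Series {q : ℍ} (hq : 1 < ‖q‖) : geomSeries q ∈ l1Series := by
  show Summable _
  simp only [norm_coeff_geomSeries]
  exact (summable_nat_add_iff 1).mpr
    (summable_geometric_of_lt_one (by positivity) (inv_lt_one_of_one_lt₀ hq))

lemma l1Norm_geomSeries {q : ℍ} (hq : 1 < ‖q‖) : l1Norm (geomSeries q) = (‖q‖ - 1)⁻¹ := by
  simp only [l1Norm, norm_coeff_geomSeries, pow_succ, tsum_mul_right]
  rw [tsum_geometric_of_lt_one (by positivity) (inv_lt_one_of_one_lt₀ hq)]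
  field_simp

lemma C_sub_X_mul_geomSeries {q : ℍ} (hq : q ≠ 0) : (C q - PowerSeries.X) * geomSeries q = 1 := by
  refine PowerSeries.ext fun k => ?_
  rcases k with _ | k
  · simp [geomSeries, sub_mul, mul_inv_cancel₀ hq]
  · rw [sub_mul, map_sub, coeff_C_mul, coeff_succ_X_mul, geomSeries, coeff_mk, coeff_mk,
      coeff_one, if_neg k.succ_ne_zero, pow_succ' _ (k + 1), ← mul_assoc, mul_inv_cancel₀ hq,
      one_mul, sub_self]

lemma commute_C_coe (r : ℝ) (f : ℍ⟦X⟧) : Commute (C (r : ℍ)) f :=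
  PowerSeries.ext fun k => by rw [coeff_C_mul, coeff_mul_C, Quaternion.coe_commutes]

def qsPoly (s : ℍ) : ℍ⟦X⟧ := (C s - PowerSeries.X) * (C (star s) - PowerSeries.X)

lemma qsPoly_eq (s : ℍ) :
    qsPoly s = PowerSeries.X * PowerSeries.X - C ((2 * s.re : ℝ) : ℍ) * PowerSeries.X
      + C ((‖s‖ ^ 2 : ℝ) : ℍ) := by
  have hnorm : C s * C (star s) = C ((‖s‖ ^ 2 : ℝ) : ℍ) := by
    rw [← map_mul, Quaternion.self_mul_star, Quaternion.normSq_eq_norm_mul_self, sq]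
  have hre : C ((2 * s.re : ℝ) : ℍ) * PowerSeries.X
      = C s * PowerSeries.X + PowerSeries.X * C (star s) := by
    rw [← Quaternion.self_add_star', map_add, add_mul, (commute_X (C (star s))).eq]
  rw [qsPoly, hre, ← hnorm]
  noncomm_ring

lemma qsPoly_star (s : ℍ) : qsPoly (star s) = qsPoly s := by
  rw [qsPoly_eq, qsPoly_eq, Quaternion.re_star, norm_star]

lemma commute_qsPoly (s : ℍ) (f : ℍ⟦X⟧) : Commute (qsPoly s) f := by
  rw [qsPoly_eq]
  exact (((commute_X f).symm.mul_left (commute_X f).symm).sub_left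
    ((commute_C_coe _ f).mul_left (commute_X f).symm)).add_left (commute_C_coe _ f)

lemma qsPoly_mul_geomSeries {s : ℍ} (hs : s ≠ 0) :
    qsPoly s * geomSeries s = C (star s) - PowerSeries.X := by
  rw [← qsPoly_star, qsPoly, star_star, mul_assoc, C_sub_X_mul_geomSeries hs, mul_one]

def qsInvSeries (s : ℍ) : ℍ⟦X⟧ := geomSeries (star s) * geomSeries s

lemma qsPoly_mul_qsInvSeries {s : ℍ} (hs : s ≠ 0) : qsPoly s * qsInvSeries s = 1 := by
  rw [qsPoly, qsInvSeries, mul_assoc, ← mul_assoc (C (star s) - _),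
    C_sub_X_mul_geomSeries (star_ne_zero.2 hs), one_mul, C_sub_X_mul_geomSeries hs]

lemma qsPoly_pow_mul_geomSeries_pow {s : ℍ} (hs : s ≠ 0) (n : ℕ) :
    qsPoly s ^ n * geomSeries s ^ n = (C (star s) - PowerSeries.X) ^ n := by
  rw [← (commute_qsPoly s _).mul_pow, qsPoly_mul_geomSeries hs]

lemma star_coeff_qsInvSeries (s : ℍ) (k : ℕ) :
    star (coeff k (qsInvSeries s)) = coeff k (qsInvSeries s) := by
  rw [qsInvSeries, coeff_mul, star_sum, ← Finset.Nat.sum_antidiagonal_swap]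
  refine Finset.sum_congr rfl fun p _ => ?_
  simp only [geomSeries, coeff_mk, star_mul, star_pow, star_inv₀, star_star, Prod.fst_swap,
    Prod.snd_swap]

lemma qsInvSeries_mem_l1Series {s : ℍ} (hs : 1 < ‖s‖) : qsInvSeries s ∈ l1Series :=
  mul_mem (geomSeries_mem_l1Series (by rwa [norm_star])) (geomSeries_mem_l1Series hs)

lemma l1Norm_geomSeries_pow_mul_C_pow_le {s : ℍ} (hs : 1 < ‖s‖) (n : ℕ) :
    l1Norm (geomSeries s ^ n * C (s ^ n)) ≤ ((1 - ‖s‖⁻¹) ^ n)⁻¹ := by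
  rw [l1Norm_mul_C, norm_pow]
  calc l1Norm (geomSeries s ^ n) * ‖s‖ ^ n ≤ (‖s‖ - 1)⁻¹ ^ n * ‖s‖ ^ n := by
        gcongr
        exact (l1Norm_pow_le (geomSeries_mem_l1Series hs) n).trans_eq
          (by rw [l1Norm_geomSeries hs])
    _ = ((1 - ‖s‖⁻¹) ^ n)⁻¹ := by
        rw [← mul_pow, ← inv_pow]
        congr 1
        field_simp

section LeftMultiplication

variable {E : Type*} [NormedAddCommGroup E] [NormedSpace ℝ E] [Module ℍ E]
  [SMulCommClass ℝ ℍ E] [IsBoundedSMul ℍ E]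

lemma lmulL_add (a b : ℍ) : (lmulL (a + b) : E →L[ℝ] E) = lmulL a + lmulL b := by
  ext v; simp [lmulL, add_smul]

lemma lmulL_mul (a b : ℍ) : (lmulL (a * b) : E →L[ℝ] E) = lmulL a * lmulL b := by
  ext v; simp [lmulL, mul_smul]

lemma lmulL_zero : (lmulL 0 : E →L[ℝ] E) = 0 :=
  map_zero (AddMonoidHom.mk' lmulL lmulL_add)

lemma lmulL_sum {ι : Type*} (t : Finset ι) (a : ι → ℍ) :
    (lmulL (∑ i ∈ t, a i) : E →L[ℝ] E) = ∑ i ∈ t, lmulL (a i) :=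
  map_sum (AddMonoidHom.mk' lmulL lmulL_add) a t

lemma lmulL_neg (a : ℍ) : (lmulL (-a) : E →L[ℝ] E) = -lmulL a :=
  map_neg (AddMonoidHom.mk' lmulL lmulL_add) a

lemma lmulL_sub (a b : ℍ) : (lmulL (a - b) : E →L[ℝ] E) = lmulL a - lmulL b :=
  map_sub (AddMonoidHom.mk' lmulL lmulL_add) a b

lemma norm_lmulL_le (a : ℍ) : ‖(lmulL a : E →L[ℝ] E)‖ ≤ ‖a‖ :=
  LinearMap.mkContinuous_norm_le _ (norm_nonneg a) _

variable [IsScalarTower ℝ ℍ E]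

lemma lmulL_coe (r : ℝ) : (lmulL (r : ℍ) : E →L[ℝ] E) = r • 1 := by
  ext v; simp [lmulL, ← Quaternion.algebraMap_def, algebraMap_smul]

lemma lmulL_smul (r : ℝ) (a : ℍ) : (lmulL (r • a) : E →L[ℝ] E) = r • lmulL a := by
  rw [← Quaternion.coe_mul_eq_smul, lmulL_mul, lmulL_coe, smul_mul_assoc, one_mul]

lemma lmulL_one : (lmulL 1 : E →L[ℝ] E) = 1 := by
  simpa using lmulL_coe (E := E) 1

end LeftMultiplication

section OperatorSeries

variable {E : Type*} [NormedAddCommGroup E] [NormedSpace ℝ E] [Module ℍ E]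
  [SMulCommClass ℝ ℍ E] [IsBoundedSMul ℍ E] {T : E →L[ℝ] E} {P : ℝ}

/-- `f(T) = ∑ₖ Tᵏ ∘ (fₖ • ·)`. Left multiplication by a quaternion does not commute with `T`,
so this is not multiplicative in `f`; it only respects multiplication by `X` and by real
constants on the left and by constants on the right. -/
def opSeries (T : E →L[ℝ] E) (f : ℍ⟦X⟧) : E →L[ℝ] E := ∑' k, T ^ k * lmulL (coeff k f)

lemma opSeries_C (q : ℍ) : opSeries T (C q) = lmulL q := by
  rw [opSeries, tsum_eq_single 0 fun k hk => by rw [coeff_C, if_neg hk, lmulL_zero, mul_zero],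
    pow_zero, one_mul, coeff_zero_C]

lemma opSeries_neg (f : ℍ⟦X⟧) : opSeries T (-f) = -opSeries T f := by
  simp only [opSeries, map_neg, lmulL_neg, mul_neg, tsum_neg]

variable [CompleteSpace E]

lemma summable_opSeries (hP : ∀ k, ‖T ^ k‖ ≤ P) {f : ℍ⟦X⟧} (hf : f ∈ l1Series) :
    Summable fun k => T ^ k * lmulL (coeff k f) := by
  refine Summable.of_norm_bounded ((mem_l1Series.mp hf).mul_left P) fun k => ?_
  calc ‖T ^ k * lmulL (coeff k f)‖ ≤ ‖T ^ k‖ * ‖(lmulL (coeff k f) : E →L[ℝ] E)‖ :=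
        norm_mul_le _ _
    _ ≤ P * ‖coeff k f‖ :=
      mul_le_mul (hP k) (norm_lmulL_le _) (norm_nonneg _) ((norm_nonneg _).trans (hP 0))

variable (hP : ∀ k, ‖T ^ k‖ ≤ P)
include hP

lemma opSeries_add {f g : ℍ⟦X⟧} (hf : f ∈ l1Series) (hg : g ∈ l1Series) :
    opSeries T (f + g) = opSeries T f + opSeries T g := by
  simp only [opSeries, map_add, lmulL_add, mul_add]
  exact (summable_opSeries hP hf).tsum_add (summable_opSeries hP hg)

lemma opSeries_sub {f g : ℍ⟦X⟧} (hf : f ∈ l1Series) (hg : g ∈ l1Series) :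
    opSeries T (f - g) = opSeries T f - opSeries T g := by
  simp only [opSeries, map_sub, lmulL_sub, mul_sub]
  exact (summable_opSeries hP hf).tsum_sub (summable_opSeries hP hg)

lemma opSeries_sum {ι : Type*} (t : Finset ι) {f : ι → ℍ⟦X⟧} (hf : ∀ i ∈ t, f i ∈ l1Series) :
    opSeries T (∑ i ∈ t, f i) = ∑ i ∈ t, opSeries T (f i) := by
  simp only [opSeries, map_sum, lmulL_sum, Finset.mul_sum]
  exact Summable.tsum_finsetSum fun i hi => summable_opSeries hP (hf i hi)

lemma opSeries_X_mul {f : ℍ⟦X⟧} (hf : f ∈ l1Series) :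
    opSeries T (PowerSeries.X * f) = T * opSeries T f := by
  rw [opSeries, (summable_opSeries hP (mul_mem X_mem_l1Series hf)).tsum_eq_zero_add, opSeries,
    ← (summable_opSeries hP hf).tsum_mul_left]
  simp only [coeff_zero_X_mul, lmulL_zero, mul_zero, zero_add, coeff_succ_X_mul, pow_succ',
    mul_assoc]

lemma opSeries_mul_C {f : ℍ⟦X⟧} (hf : f ∈ l1Series) (q : ℍ) :
    opSeries T (f * C q) = opSeries T f * lmulL q := by
  simp only [opSeries, coeff_mul_C, lmulL_mul, ← mul_assoc]
  exact (summable_opSeries hP hf).tsum_mul_right _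

lemma opSeries_neg_X_pow_mul {f : ℍ⟦X⟧} (hf : f ∈ l1Series) (m : ℕ) :
    opSeries T ((-PowerSeries.X) ^ m * f) = (-T) ^ m * opSeries T f := by
  induction m with
  | zero => rw [pow_zero, pow_zero, one_mul, one_mul]
  | succ m ih =>
    have hm : (-PowerSeries.X) ^ m * f ∈ l1Series :=
      mul_mem (pow_mem (neg_mem X_mem_l1Series) m) hf
    rw [pow_succ', mul_assoc, neg_mul, opSeries_neg, opSeries_X_mul hP hm, ih, pow_succ',
      neg_mul, neg_mul, mul_assoc]

lemma norm_pow_mul_opSeries_le {f : ℍ⟦X⟧} (hf : f ∈ l1Series) {n : ℕ} {P' : ℝ}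
    (hP' : ∀ k, ‖T ^ (n + k)‖ ≤ P') : ‖T ^ n * opSeries T f‖ ≤ P' * l1Norm f := by
  rw [opSeries, ← (summable_opSeries hP hf).tsum_mul_left]
  refine tsum_of_norm_bounded ((mem_l1Series.mp hf).hasSum.mul_left P') fun k => ?_
  rw [← mul_assoc, ← pow_add]
  calc ‖T ^ (n + k) * lmulL (coeff k f)‖
      ≤ ‖T ^ (n + k)‖ * ‖(lmulL (coeff k f) : E →L[ℝ] E)‖ := norm_mul_le _ _
    _ ≤ P' * ‖coeff k f‖ :=
      mul_le_mul (hP' k) (norm_lmulL_le _) (norm_nonneg _) ((norm_nonneg _).trans (hP' 0))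

end OperatorSeries

section RealCoefficients

variable {E : Type*} [NormedAddCommGroup E] [NormedSpace ℝ E] [Module ℍ E]
  [SMulCommClass ℝ ℍ E] [IsBoundedSMul ℍ E] [IsScalarTower ℝ ℍ E] {T : E →L[ℝ] E} {P : ℝ}

lemma opSeries_C_coe_mul (r : ℝ) (f : ℍ⟦X⟧) :
    opSeries T (C (r : ℍ) * f) = r • opSeries T f := by
  simp only [opSeries, coeff_C_mul, Quaternion.coe_mul_eq_smul, lmulL_smul, mul_smul_comm,
    tsum_const_smul'']

lemma commute_opSeries_of_real {f : ℍ⟦X⟧} (hf : ∀ k, star (coeff k f) = coeff k f) :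
    Commute T (opSeries T f) :=
  Commute.tsum_right T fun k => by
    rw [Quaternion.star_eq_self.mp (hf k), lmulL_coe]
    exact (Commute.self_pow T k).mul_right ((Commute.one_right T).smul_right _)

variable [CompleteSpace E] (hP : ∀ k, ‖T ^ k‖ ≤ P)
include hP

lemma opSeries_qsPoly_mul (s : ℍ) {f : ℍ⟦X⟧} (hf : f ∈ l1Series) :
    opSeries T (qsPoly s * f) = Qs s T * opSeries T f := by
  have hXf : PowerSeries.X * f ∈ l1Series := mul_mem X_mem_l1Series hf
  rw [qsPoly_eq, add_mul, sub_mul, mul_assoc, mul_assoc,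
    opSeries_add hP (sub_mem (mul_mem X_mem_l1Series hXf) (mul_mem (C_mem_l1Series _) hXf))
      (mul_mem (C_mem_l1Series _) hf),
    opSeries_sub hP (mul_mem X_mem_l1Series hXf) (mul_mem (C_mem_l1Series _) hXf),
    opSeries_C_coe_mul, opSeries_C_coe_mul, opSeries_X_mul hP hXf, opSeries_X_mul hP hf, Qs,
    add_mul, sub_mul, mul_assoc, smul_mul_assoc, smul_mul_assoc, one_mul]

lemma opSeries_qsPoly_pow_mul (s : ℍ) {f : ℍ⟦X⟧} (hf : f ∈ l1Series) (n : ℕ) :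
    opSeries T (qsPoly s ^ n * f) = Qs s T ^ n * opSeries T f := by
  induction n with
  | zero => rw [pow_zero, pow_zero, one_mul, one_mul]
  | succ n ih =>
    have hqs : qsPoly s ∈ l1Series :=
      mul_mem (sub_mem (C_mem_l1Series s) X_mem_l1Series)
        (sub_mem (C_mem_l1Series _) X_mem_l1Series)
    rw [pow_succ', mul_assoc, opSeries_qsPoly_mul hP s (mul_mem (pow_mem hqs n) hf), ih,
      pow_succ', mul_assoc]

lemma opSeries_C_sub_X_pow (q : ℍ) (n : ℕ) :
    opSeries T ((C q - PowerSeries.X) ^ n)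
      = ∑ m ∈ Finset.range (n + 1), (n.choose m : ℝ) • ((-T) ^ m * lmulL (q ^ (n - m))) := by
  have hterm : ∀ m, (-PowerSeries.X) ^ m * C q ^ (n - m) * (n.choose m : ℍ⟦X⟧)
      = (-PowerSeries.X) ^ m * C (q ^ (n - m) * ((n.choose m : ℝ) : ℍ)) := by
    intro m
    rw [mul_assoc, ← map_pow, ← map_natCast C, ← map_mul]
    norm_cast
  rw [← neg_add_eq_sub, ((commute_X (C q)).symm.neg_left).add_pow,
    opSeries_sum hP _ fun m _ => ?_]
  · refine Finset.sum_congr rfl fun m _ => ?_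
    rw [hterm, opSeries_neg_X_pow_mul hP (C_mem_l1Series _), opSeries_C, lmulL_mul, lmulL_coe,
      mul_smul_comm, mul_one, mul_smul_comm]
  · rw [hterm]
    exact mul_mem (pow_mem (neg_mem X_mem_l1Series) m) (C_mem_l1Series _)

end RealCoefficients

section RightLinearity

variable {E : Type*} [NormedAddCommGroup E] [NormedSpace ℝ E] [Module ℍᵐᵒᵖ E]

lemma RightLinear.mul {A B : E →L[ℝ] E} (hA : RightLinear A) (hB : RightLinear B) :
    RightLinear (A * B) := fun q v => by
  change A (B _) = op q • A (B v)
  rw [hB q v, hA q (B v)]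

lemma RightLinear.pow {A : E →L[ℝ] E} (hA : RightLinear A) (n : ℕ) : RightLinear (A ^ n) := by
  induction n with
  | zero => exact fun _ _ => rfl
  | succ n ih => rw [pow_succ]; exact ih.mul hA

lemma RightLinear.tsum [CompleteSpace E] [IsBoundedSMul ℍᵐᵒᵖ E] {A : ℕ → E →L[ℝ] E}
    (hA : Summable A) (h : ∀ k, RightLinear (A k)) : RightLinear (∑' k, A k) := by
  intro q v
  have happly : ∀ w : E, (∑' k, A k) w = ∑' k, A k w := fun w =>
    (ContinuousLinearMap.apply ℝ E w).map_tsum hA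
  have hAv : Summable fun k => A k v := (ContinuousLinearMap.apply ℝ E v).summable hA
  rw [happly, happly, ← hAv.tsum_const_smul]
  exact tsum_congr fun k => h k q v

variable [Module ℍ E] [SMulCommClass ℝ ℍ E] [IsBoundedSMul ℍ E]

lemma rightLinear_lmulL [SMulCommClass ℍ ℍᵐᵒᵖ E] (a : ℍ) : RightLinear (lmulL a : E →L[ℝ] E) :=
  fun q v => smul_comm a (op q) v

lemma RightLinear.opSeries [CompleteSpace E] [IsBoundedSMul ℍᵐᵒᵖ E] [SMulCommClass ℍ ℍᵐᵒᵖ E]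
    {T : E →L[ℝ] E} {P : ℝ} (hT : RightLinear T) (hP : ∀ k, ‖T ^ k‖ ≤ P) {f : ℍ⟦X⟧}
    (hf : f ∈ l1Series) : RightLinear (opSeries T f) :=
  RightLinear.tsum (summable_opSeries hP hf) fun k => (hT.pow k).mul (rightLinear_lmulL _)

end RightLinearity

section SResolvent

variable {E : Type*} [NormedAddCommGroup E] [NormedSpace ℝ E] {T : E →L[ℝ] E}

lemma Commute.Qs_left {A : E →L[ℝ] E} (h : Commute T A) (s : ℍ) : Commute (Qs s T) A :=
  ((h.mul_left h).sub_left (h.smul_left _)).add_left ((Commute.one_left A).smul_left _)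

variable [CompleteSpace E] [Module ℍ E] [SMulCommClass ℝ ℍ E] [IsBoundedSMul ℍ E]
  [IsScalarTower ℝ ℍ E] {P : ℝ} {s : ℍ} (hs : 1 < ‖s‖) (hP : ∀ k, ‖T ^ k‖ ≤ P)
include hs hP

lemma Qs_mul_opSeries_qsInvSeries : Qs s T * opSeries T (qsInvSeries s) = 1 := by
  rw [← opSeries_qsPoly_mul hP s (qsInvSeries_mem_l1Series hs),
    qsPoly_mul_qsInvSeries (norm_pos_iff.mp (one_pos.trans hs)), ← map_one C,
    opSeries_C, lmulL_one]

lemma opSeries_qsInvSeries_mul_Qs : opSeries T (qsInvSeries s) * Qs s T = 1 := by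
  rw [← ((commute_opSeries_of_real (star_coeff_qsInvSeries s)).Qs_left s).eq,
    Qs_mul_opSeries_qsInvSeries hs hP]

lemma isUnit_Qs : IsUnit (Qs s T) :=
  isUnit_iff_exists.mpr ⟨_, Qs_mul_opSeries_qsInvSeries hs hP, opSeries_qsInvSeries_mul_Qs hs hP⟩

lemma sResLn_eq_opSeries (n : ℕ) : sResLn n s T = opSeries T (geomSeries s ^ n) := by
  rw [sResLn, Ring.inverse_pow_mul_eq_iff_eq_mul _ _ (isUnit_Qs hs hP),
    ← opSeries_qsPoly_pow_mul hP s (pow_mem (geomSeries_mem_l1Series hs) n),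
    qsPoly_pow_mul_geomSeries_pow (norm_pos_iff.mp (one_pos.trans hs)), opSeries_C_sub_X_pow hP]

end SResolvent

section PowerBounded

variable {E : Type*} [NormedAddCommGroup E] [NormedSpace ℝ E] {T : E →L[ℝ] E}

lemma PowerBounded.norm_pow_succ_le (h : PowerBounded T) (k : ℕ) : ‖T ^ (k + 1)‖ ≤ pBound T := by
  obtain ⟨C, hC⟩ := h
  exact le_ciSup (f := fun j => ‖T ^ (j + 1)‖) ⟨C, by rintro _ ⟨j, rfl⟩; exact hC _ j.succ_pos⟩ k

lemma PowerBounded.norm_pow_le (h : PowerBounded T) (k : ℕ) : ‖T ^ k‖ ≤ max 1 (pBound T) := by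
  rcases k with _ | k
  · rw [pow_zero]
    exact ContinuousLinearMap.norm_id_le.trans (le_max_left _ _)
  · exact (h.norm_pow_succ_le k).trans (le_max_right _ _)

end PowerBounded

/-- If `T` is power-bounded then for `|s| > 1` and `n ≥ 1`, `s ∈ ρ_S(T)` and
`‖Y_L^n(s,T)‖ ≤ p(T)/(1 − |s|⁻¹)ⁿ`. -/
theorem yosida_bound_of_powerBounded (T : X →L[ℝ] X) (hT : RightLinear T)
    (hpb : PowerBounded T) (s : ℍ) (hs : 1 < ‖s‖) (n : ℕ) (hn : 1 ≤ n) :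
    s ∈ sResolventSet T ∧ ‖YLn n s T‖ ≤ pBound T / (1 - ‖s‖⁻¹) ^ n := by
  have hP := hpb.norm_pow_le
  refine ⟨⟨_, hT.opSeries hP (qsInvSeries_mem_l1Series hs), Qs_mul_opSeries_qsInvSeries hs hP,
    opSeries_qsInvSeries_mul_Qs hs hP⟩, ?_⟩
  have hG : geomSeries s ^ n ∈ l1Series := pow_mem (geomSeries_mem_l1Series hs) n
  have hTn : ∀ k, ‖T ^ (n + k)‖ ≤ pBound T := fun k => by
    obtain ⟨j, hj⟩ : ∃ j, n + k = j + 1 := ⟨n + k - 1, by omega⟩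
    exact hj ▸ hpb.norm_pow_succ_le j
  calc ‖YLn n s T‖ = ‖T ^ n * opSeries T (geomSeries s ^ n * C (s ^ n))‖ := by
        rw [YLn, sResLn_eq_opSeries hs hP, opSeries_mul_C hP hG, mul_assoc]
    _ ≤ pBound T * l1Norm (geomSeries s ^ n * C (s ^ n)) :=
        norm_pow_mul_opSeries_le hP (mul_mem hG (C_mem_l1Series _)) hTn
    _ ≤ pBound T * ((1 - ‖s‖⁻¹) ^ n)⁻¹ :=
        mul_le_mul_of_nonneg_left (l1Norm_geomSeries_pow_mul_C_pow_le hs n)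
          ((norm_nonneg _).trans (hpb.norm_pow_succ_le 0))
    _ = pBound T / (1 - ‖s‖⁻¹) ^ n := (div_eq_mul_inv _ _).symm
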